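/- (Equilibrium margin inequality.) Suppose the game has a unique Nash equilibrium z* = (x*, y*), and let C = min{c_x, c_y} ∈ (0,1]. Then for every z = (x,y) ∈ Z = X × Y, max_{z'∈V*(Z)} F(z)ᵀ(z − z') ≥ C ‖z* − z‖₁, where V*(Z) = V*(X) × V*(Y). -/

import Mathlib

open Finset Filter Topology

noncomputable section

/-- Squared Euclidean norm on `ℝ^n`. -/
def sqnorm {n : ℕ} (z : Fin n → ℝ) : ℝ := ∑ i, (z i) ^ 2

/-- Euclidean (2-)norm on `ℝ^n`. -/
def norm2 {n : ℕ} (z : Fin n → ℝ) : ℝ := Real.sqrt (sqnorm z)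

/-- 1-norm on `ℝ^n`. -/
def norm1 {n : ℕ} (z : Fin n → ℝ) : ℝ := ∑ i, |z i|

/-- Dot product on `ℝ^n`. -/
def dotp {n : ℕ} (a b : Fin n → ℝ) : ℝ := ∑ i, a i * b i

/-- Treeplexes (Hoda et al.): probability simplexes, Cartesian products, and branching. -/
inductive IsTreeplex : {n : ℕ} → Set (Fin n → ℝ) → Prop
  | simplex (m : ℕ) :
      IsTreeplex {x : Fin (m + 1) → ℝ | (∀ i, 0 ≤ x i) ∧ (∑ i, x i) = 1}
  | prod {m k : ℕ} {S : Set (Fin m → ℝ)} {T : Set (Fin k → ℝ)} :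
      IsTreeplex S → IsTreeplex T →
      IsTreeplex {z : Fin (m + k) → ℝ | ∃ u ∈ S, ∃ v ∈ T, z = Fin.append u v}
  | branch {m k : ℕ} {S : Set (Fin m → ℝ)} {T : Set (Fin k → ℝ)} (i : Fin m) :
      IsTreeplex S → IsTreeplex T →
      IsTreeplex {z : Fin (m + k) → ℝ | ∃ u ∈ S, ∃ v ∈ T,
        z = Fin.append u (fun j => u i * v j)}

/-- A point `z = (x, y)` of the product space `ℝ^M × ℝ^N`. -/
abbrev Pt (M N : ℕ) := (Fin M → ℝ) × (Fin N → ℝ)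

def dotPt {M N : ℕ} (a b : Pt M N) : ℝ := dotp a.1 b.1 + dotp a.2 b.2

def sqnormPt {M N : ℕ} (z : Pt M N) : ℝ := sqnorm z.1 + sqnorm z.2

def norm2Pt {M N : ℕ} (z : Pt M N) : ℝ := Real.sqrt (sqnormPt z)

def norm1Pt {M N : ℕ} (z : Pt M N) : ℝ := norm1 z.1 + norm1 z.2

/-- The game operator `F(z) = (G y, -Gᵀ x)`. -/
def Fop {M N : ℕ} (G : Matrix (Fin M) (Fin N) ℝ) (z : Pt M N) : Pt M N :=
  (G.mulVec z.2, -(G.transpose.mulVec z.1))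

/-- Bregman divergence of `ψ` (via the Fréchet derivative). -/
def Dbreg {M N : ℕ} (ψ : Pt M N → ℝ) (u v : Pt M N) : ℝ :=
  ψ u - ψ v - fderiv ℝ ψ v (u - v)

/-- Bregman divergence on a single space. -/
def Dbreg1 {n : ℕ} (ψ : (Fin n → ℝ) → ℝ) (u v : Fin n → ℝ) : ℝ :=
  ψ u - ψ v - fderiv ℝ ψ v (u - v)

/-- Optimistic online mirror descent with Bregman-divergence function `D`,
step size `η`, iterates `z` and `zh` (the latter is `ẑ`), started from an
arbitrary `ẑ₁ = z₀ ∈ Z`. -/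
def IsOOMD {M N : ℕ} (G : Matrix (Fin M) (Fin N) ℝ) (Z : Set (Pt M N))
    (D : Pt M N → Pt M N → ℝ) (η : ℝ) (z zh : ℕ → Pt M N) : Prop :=
  z 0 ∈ Z ∧ zh 1 = z 0 ∧
  (∀ t : ℕ, 1 ≤ t → z t ∈ Z ∧
    ∀ w ∈ Z, η * dotPt (z t) (Fop G (z (t - 1))) + D (z t) (zh t) ≤
      η * dotPt w (Fop G (z (t - 1))) + D w (zh t)) ∧
  (∀ t : ℕ, 1 ≤ t → zh (t + 1) ∈ Z ∧
    ∀ w ∈ Z, η * dotPt (zh (t + 1)) (Fop G (z t)) + D (zh (t + 1)) (zh t) ≤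
      η * dotPt w (Fop G (z t)) + D w (zh t))

def maxPayoff {M N : ℕ} (G : Matrix (Fin M) (Fin N) ℝ) (Y : Set (Fin N → ℝ))
    (x : Fin M → ℝ) : ℝ :=
  sSup ((fun y => dotp x (G.mulVec y)) '' Y)

def minPayoff {M N : ℕ} (G : Matrix (Fin M) (Fin N) ℝ) (X : Set (Fin M → ℝ))
    (y : Fin N → ℝ) : ℝ :=
  sInf ((fun x => dotp x (G.mulVec y)) '' X)

/-- `X* = argmin_{x ∈ X} max_{y ∈ Y} xᵀGy`. -/
def Xstar {M N : ℕ} (G : Matrix (Fin M) (Fin N) ℝ) (X : Set (Fin M → ℝ))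
    (Y : Set (Fin N → ℝ)) : Set (Fin M → ℝ) :=
  {x ∈ X | ∀ x' ∈ X, maxPayoff G Y x ≤ maxPayoff G Y x'}

/-- `Y* = argmax_{y ∈ Y} min_{x ∈ X} xᵀGy`. -/
def Ystar {M N : ℕ} (G : Matrix (Fin M) (Fin N) ℝ) (X : Set (Fin M → ℝ))
    (Y : Set (Fin N → ℝ)) : Set (Fin N → ℝ) :=
  {y ∈ Y | ∀ y' ∈ Y, minPayoff G X y' ≤ minPayoff G X y}

/-- The set of Nash equilibria `Z* = X* × Y*`. -/
def NashSet {M N : ℕ} (G : Matrix (Fin M) (Fin N) ℝ) (X : Set (Fin M → ℝ))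
    (Y : Set (Fin N → ℝ)) : Set (Pt M N) :=
  (Xstar G X Y) ×ˢ (Ystar G X Y)

/-- Generalized KL divergence (Bregman divergence of the vanilla entropy),
with the convention `0 ln 0 = 0`. -/
def KLgen {n : ℕ} (u v : Fin n → ℝ) : ℝ :=
  ∑ i, (u i * Real.log (u i / v i) - u i + v i)

def KLgenPt {M N : ℕ} (u v : Pt M N) : ℝ := KLgen u.1 v.1 + KLgen u.2 v.2

/-- The combinatorial structure of a treeplex in sequence form: indices `Fin n`,
information sets `Fin K`, the information set `owner i = h(i)` of each index,
and the parent index `parent h = σ(h)` of each information set (`none` for the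
root convention `z_{σ(h)} = 1`), with an acyclicity witness. -/
structure TreeplexData (n K : ℕ) where
  owner : Fin n → Fin K
  parent : Fin K → Option (Fin n)
  rank : Fin K → ℕ
  parent_rank : ∀ (h : Fin K) (j : Fin n), parent h = some j → rank (owner j) < rank h

/-- `z_{σ(h)}`, with the convention that it is `1` when `h` has no parent. -/
def TreeplexData.parentVal {n K : ℕ} (T : TreeplexData n K) (z : Fin n → ℝ) (h : Fin K) : ℝ :=
  (T.parent h).elim 1 z

/-- The treeplex determined by `T`: `z ≥ 0` with `∑_{i ∈ Ω_h} z_i = z_{σ(h)}`. -/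
def TreeplexData.set {n K : ℕ} (T : TreeplexData n K) : Set (Fin n → ℝ) :=
  {z | (∀ i, 0 ≤ z i) ∧
    ∀ h : Fin K, (∑ i ∈ Finset.univ.filter (fun i => T.owner i = h), z i) = T.parentVal z h}

/-- `q_i = z_i / z_{p_i}`. -/
def TreeplexData.q {n K : ℕ} (T : TreeplexData n K) (z : Fin n → ℝ) (i : Fin n) : ℝ :=
  z i / T.parentVal z (T.owner i)

/-- The dilated entropy `Ψ^dil_α(z) = ∑_i α_{h(i)} z_i ln q_i`. -/
def dilEnt {n K : ℕ} (T : TreeplexData n K) (α : Fin K → ℝ) (z : Fin n → ℝ) : ℝ :=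
  ∑ i, α (T.owner i) * z i * Real.log (T.q z i)

/-- Bregman divergence of the dilated entropy:
`D(u, z) = ∑_i α_{h(i)} u_i ln(q^u_i / q^z_i)`, with `0 ln 0 = 0`. -/
def dilEntBreg {n K : ℕ} (T : TreeplexData n K) (α : Fin K → ℝ) (u z : Fin n → ℝ) : ℝ :=
  ∑ i, α (T.owner i) * u i * Real.log (T.q u i / T.q z i)

/-- Coordinates of a pair `z = (x, y)` indexed by `Fin M ⊕ Fin N`. -/
def coordsOf {M N : ℕ} (z : Pt M N) : Fin M ⊕ Fin N → ℝ := Sum.elim z.1 z.2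

/-- `V*(X) = {x ∈ X : supp(x) ⊆ supp(x*)}`. -/
def suppSubset {M : ℕ} (X : Set (Fin M → ℝ)) (xs : Fin M → ℝ) : Set (Fin M → ℝ) :=
  {x ∈ X | ∀ i, x i ≠ 0 → xs i ≠ 0}

/-- The value `max_{y ∈ V*(Y)} (x − x*)ᵀ G y / ‖x − x*‖₁`. -/
def cxVal {M N : ℕ} (G : Matrix (Fin M) (Fin N) ℝ) (Y : Set (Fin N → ℝ))
    (xs : Fin M → ℝ) (ys : Fin N → ℝ) (x : Fin M → ℝ) : ℝ :=
  sSup ((fun y => dotp (x - xs) (G.mulVec y)) '' suppSubset Y ys) / norm1 (x - xs)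

/-- The value `max_{x ∈ V*(X)} xᵀ G (y* − y) / ‖y* − y‖₁`. -/
def cyVal {M N : ℕ} (G : Matrix (Fin M) (Fin N) ℝ) (X : Set (Fin M → ℝ))
    (xs : Fin M → ℝ) (ys : Fin N → ℝ) (y : Fin N → ℝ) : ℝ :=
  sSup ((fun x => dotp x (G.mulVec (ys - y))) '' suppSubset X xs) / norm1 (ys - y)

/-- `c_x = min_{x ∈ X, x ≠ x*} cxVal x`. -/
def cx {M N : ℕ} (G : Matrix (Fin M) (Fin N) ℝ) (X : Set (Fin M → ℝ))
    (Y : Set (Fin N → ℝ)) (xs : Fin M → ℝ) (ys : Fin N → ℝ) : ℝ :=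
  sInf ((fun x => cxVal G Y xs ys x) '' {x ∈ X | x ≠ xs})

/-- `c_y = min_{y ∈ Y, y ≠ y*} cyVal y`. -/
def cy {M N : ℕ} (G : Matrix (Fin M) (Fin N) ℝ) (X : Set (Fin M → ℝ))
    (Y : Set (Fin N → ℝ)) (xs : Fin M → ℝ) (ys : Fin N → ℝ) : ℝ :=
  sInf ((fun y => cyVal G X xs ys y) '' {y ∈ Y | y ≠ ys})

/-! By the minimax theorem the game has a saddle point, which by uniqueness of the equilibrium is
`(x*, y*)`. From any point `z*` of a treeplex one can step a little beyond `z*`, away from any `z'`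
whose support lies in that of `z*`; hence a linear function maximised over a treeplex at `z*` is
constant on `V*`. This is complementary slackness: `x*ᵀ G y' = x*ᵀ G y* = x'ᵀ G y*` for
`x' ∈ V*(X)` and `y' ∈ V*(Y)`, so that `F(z)ᵀ(z - (x', y')) = (x - x*)ᵀ G y' + x'ᵀ G (y* - y)`.
Maximising the two terms separately gives at least `c_x ‖x - x*‖₁ + c_y ‖y* - y‖₁`. -/

open Matrix

theorem csSup_add_csSup_le {α : Type*} [ConditionallyCompleteLattice α] [AddCommGroup α]
    [IsOrderedAddMonoid α] {A B : Set α} {c : α} (hA : A.Nonempty) (hB : B.Nonempty)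
    (h : ∀ a ∈ A, ∀ b ∈ B, a + b ≤ c) : sSup A + sSup B ≤ c :=
  le_sub_iff_add_le.1 <| csSup_le hA fun a ha =>
    le_sub_comm.1 <| csSup_le hB fun b hb => le_sub_iff_add_le'.2 (h a ha b hb)

theorem Fin.append_add_append {α : Type*} [Add α] {m n : ℕ} (u₁ u₂ : Fin m → α)
    (v₁ v₂ : Fin n → α) :
    Fin.append u₁ v₁ + Fin.append u₂ v₂ = Fin.append (u₁ + u₂) (v₁ + v₂) := by
  funext i
  refine Fin.addCases (fun i => ?_) (fun i => ?_) i <;> simp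

theorem Fin.append_sub_append {α : Type*} [Sub α] {m n : ℕ} (u₁ u₂ : Fin m → α)
    (v₁ v₂ : Fin n → α) :
    Fin.append u₁ v₁ - Fin.append u₂ v₂ = Fin.append (u₁ - u₂) (v₁ - v₂) := by
  funext i
  refine Fin.addCases (fun i => ?_) (fun i => ?_) i <;> simp

theorem Fin.smul_append {R α : Type*} [SMul R α] {m n : ℕ} (c : R) (u : Fin m → α)
    (v : Fin n → α) : c • Fin.append u v = Fin.append (c • u) (c • v) := by
  funext i
  refine Fin.addCases (fun i => ?_) (fun i => ?_) i <;> simp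

theorem isCompact_setOf_exists_mem_eq {α β γ : Type*} [TopologicalSpace α]
    [TopologicalSpace β] [TopologicalSpace γ] {S : Set α} {T : Set β} (hS : IsCompact S)
    (hT : IsCompact T) {f : α → β → γ} (hf : Continuous (Function.uncurry f)) :
    IsCompact {z | ∃ u ∈ S, ∃ v ∈ T, z = f u v} := by
  convert (hS.prod hT).image hf using 1
  ext z
  simp [eq_comm]

theorem LinearMap.exists_isSaddlePointOn {E F : Type*}
    [NormedAddCommGroup E] [NormedSpace ℝ E] [FiniteDimensional ℝ E]
    [NormedAddCommGroup F] [NormedSpace ℝ F] [FiniteDimensional ℝ F]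
    (B : E →ₗ[ℝ] F →ₗ[ℝ] ℝ) {X : Set E} {Y : Set F}
    (hXne : X.Nonempty) (hXcv : Convex ℝ X) (hXcp : IsCompact X)
    (hYne : Y.Nonempty) (hYcv : Convex ℝ Y) (hYcp : IsCompact Y) :
    ∃ a ∈ X, ∃ b ∈ Y, IsSaddlePointOn X Y (fun x y => B x y) a b :=
  Sion.exists_isSaddlePointOn hXne hXcv hXcp
    (fun y _ => (B.flip y).continuous_of_finiteDimensional.lowerSemicontinuous
      |>.lowerSemicontinuousOn _)
    (fun y _ => ((B.flip y).convexOn hXcv).quasiconvexOn)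
    hYcv hYne hYcp
    (fun x _ => (B x).continuous_of_finiteDimensional.upperSemicontinuous
      |>.upperSemicontinuousOn _)
    (fun x _ => ((B x).concaveOn hYcv).quasiconcaveOn)

theorem dotp_eq_dotProduct {n : ℕ} (a b : Fin n → ℝ) : dotp a b = a ⬝ᵥ b := rfl

theorem norm1_nonneg {n : ℕ} (a : Fin n → ℝ) : 0 ≤ norm1 a :=
  Finset.sum_nonneg fun _ _ => abs_nonneg _

theorem norm1_sub_pos {n : ℕ} {a b : Fin n → ℝ} (h : a ≠ b) : 0 < norm1 (a - b) := by
  obtain ⟨i, hi⟩ := Function.ne_iff.1 h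
  exact Finset.sum_pos' (fun j _ => abs_nonneg _)
    ⟨i, Finset.mem_univ _, abs_pos.2 (sub_ne_zero.2 hi)⟩

theorem norm1_sub_comm {n : ℕ} (a b : Fin n → ℝ) : norm1 (a - b) = norm1 (b - a) := by
  simp only [norm1, Pi.sub_apply, abs_sub_comm]

theorem abs_dotProduct_le_norm1_mul_norm1 {n : ℕ} (a b : Fin n → ℝ) :
    |a ⬝ᵥ b| ≤ norm1 a * norm1 b := by
  calc |a ⬝ᵥ b| ≤ ∑ i, |a i| * |b i| := by
        simpa only [dotProduct, abs_mul] using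
          Finset.abs_sum_le_sum_abs (fun i => a i * b i) Finset.univ
    _ ≤ ∑ i, |a i| * norm1 b := by
        gcongr with i
        exact Finset.single_le_sum (f := fun j => |b j|) (fun j _ => abs_nonneg _)
          (Finset.mem_univ i)
    _ = norm1 a * norm1 b := (Finset.sum_mul ..).symm

theorem eventually_nhdsGE_zero_add_mul_sub_pos {a : ℝ} (b : ℝ) (ha : 0 < a) :
    ∀ᶠ η in 𝓝[≥] (0 : ℝ), 0 < a + η * (a - b) := by
  have hc : Continuous fun η : ℝ => a + η * (a - b) := by fun_prop
  exact ((hc.tendsto 0).eventually_const_lt (by simpa using ha)).filter_mono nhdsWithin_le_nhds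

theorem tendsto_mul_div_add_mul_sub_nhdsGE_zero {a b : ℝ} (ha : 0 < a) (hb : 0 ≤ b) :
    Tendsto (fun η => η * b / (a + η * (a - b))) (𝓝[≥] 0) (𝓝[≥] 0) := by
  refine tendsto_nhdsWithin_iff.2 ⟨?_, ?_⟩
  · have hc : ContinuousAt (fun η : ℝ => η * b / (a + η * (a - b))) 0 :=
      (continuousAt_id.mul continuousAt_const).div (by fun_prop) (by simpa using ha.ne')
    simpa using hc.tendsto.mono_left nhdsWithin_le_nhds
  · filter_upwards [self_mem_nhdsWithin, eventually_nhdsGE_zero_add_mul_sub_pos b ha] with η hη hc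
    exact div_nonneg (mul_nonneg hη hb) hc.le

def IsSuppExtendable {n : ℕ} (S : Set (Fin n → ℝ)) : Prop :=
  ∀ z ∈ S, ∀ z' ∈ S, (∀ i, z' i ≠ 0 → z i ≠ 0) → ∀ᶠ η in 𝓝[≥] (0 : ℝ), z + η • (z - z') ∈ S

namespace IsSuppExtendable

variable {m k : ℕ} {S : Set (Fin m → ℝ)} {T : Set (Fin k → ℝ)}

theorem stdSimplex (n : ℕ) : IsSuppExtendable (stdSimplex ℝ (Fin n)) := by
  rintro z ⟨hz₀, hz₁⟩ z' ⟨-, hz₁'⟩ hsupp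
  have hcoord : ∀ i, ∀ᶠ η in 𝓝[≥] (0 : ℝ), 0 ≤ z i + η * (z i - z' i) := by
    intro i
    rcases (hz₀ i).eq_or_lt with hzi | hzi
    · have hz'i : z' i = 0 := not_not.1 fun h => hsupp i h hzi.symm
      simp [← hzi, hz'i]
    · have hlim : Tendsto (fun η : ℝ => z i + η * (z i - z' i)) (𝓝 0) (𝓝 (z i)) := by
        have hc : Continuous fun η : ℝ => z i + η * (z i - z' i) := by fun_prop
        simpa using hc.tendsto 0
      exact ((hlim.eventually_const_lt hzi).mono fun _ => le_of_lt).filter_mono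
        nhdsWithin_le_nhds
  filter_upwards [eventually_all.2 hcoord] with η hη
  refine ⟨hη, ?_⟩
  simp only [Pi.add_apply, Pi.smul_apply, Pi.sub_apply, smul_eq_mul, Finset.sum_add_distrib,
    ← Finset.mul_sum, Finset.sum_sub_distrib, hz₁, hz₁']
  ring

theorem prod (hS : IsSuppExtendable S) (hT : IsSuppExtendable T) :
    IsSuppExtendable {z : Fin (m + k) → ℝ | ∃ u ∈ S, ∃ v ∈ T, z = Fin.append u v} := by
  rintro _ ⟨u₁, hu₁, v₁, hv₁, rfl⟩ _ ⟨u₂, hu₂, v₂, hv₂, rfl⟩ hsupp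
  have hsupp₁ : ∀ i, u₂ i ≠ 0 → u₁ i ≠ 0 := fun i => by simpa using hsupp (Fin.castAdd _ i)
  have hsupp₂ : ∀ j, v₂ j ≠ 0 → v₁ j ≠ 0 := fun j => by simpa using hsupp (Fin.natAdd _ j)
  filter_upwards [hS u₁ hu₁ u₂ hu₂ hsupp₁, hT v₁ hv₁ v₂ hv₂ hsupp₂] with η hu hv
  refine ⟨_, hu, _, hv, ?_⟩
  simp only [Fin.append_sub_append, Fin.smul_append, Fin.append_add_append]

/- In the block `u i₀ • v` the factor `u₁ i₀` becomes `c = u₁ i₀ + η (u₁ i₀ - u₂ i₀)`, so the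
step `η` in `S` is matched by the step `η u₂ i₀ / c` in `T`. -/
theorem branch (i₀ : Fin m) (hS_nonneg : ∀ u ∈ S, 0 ≤ u i₀) (hS : IsSuppExtendable S)
    (hT : IsSuppExtendable T) :
    IsSuppExtendable {z : Fin (m + k) → ℝ | ∃ u ∈ S, ∃ v ∈ T,
      z = Fin.append u (fun j => u i₀ * v j)} := by
  rintro _ ⟨u₁, hu₁, v₁, hv₁, rfl⟩ _ ⟨u₂, hu₂, v₂, hv₂, rfl⟩ hsupp
  have hsupp₁ : ∀ i, u₂ i ≠ 0 → u₁ i ≠ 0 := fun i => by simpa using hsupp (Fin.castAdd _ i)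
  have hu := hS u₁ hu₁ u₂ hu₂ hsupp₁
  have hsplit : ∀ η : ℝ, Fin.append u₁ (fun j => u₁ i₀ * v₁ j) +
      η • (Fin.append u₁ (fun j => u₁ i₀ * v₁ j) - Fin.append u₂ (fun j => u₂ i₀ * v₂ j)) =
      Fin.append (u₁ + η • (u₁ - u₂)) ((u₁ i₀ + η * u₁ i₀) • v₁ - (η * u₂ i₀) • v₂) := by
    intro η
    simp only [Fin.append_sub_append, Fin.smul_append, Fin.append_add_append]
    congr 1
    funext j
    simp only [Pi.add_apply, Pi.sub_apply, Pi.smul_apply, smul_eq_mul]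
    ring
  by_cases hu₂i : u₂ i₀ = 0
  · filter_upwards [hu] with η hu
    refine ⟨_, hu, v₁, hv₁, ?_⟩
    rw [hsplit]
    congr 1
    funext j
    simp [hu₂i]
  have hu₁i : 0 < u₁ i₀ := (hS_nonneg u₁ hu₁).lt_of_ne' (hsupp₁ i₀ hu₂i)
  have hsupp₂ : ∀ j, v₂ j ≠ 0 → v₁ j ≠ 0 := fun j hj => right_ne_zero_of_mul
    (by simpa using hsupp (Fin.natAdd _ j) (by simpa using mul_ne_zero hu₂i hj))
  have hcpos := eventually_nhdsGE_zero_add_mul_sub_pos (u₂ i₀) hu₁i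
  have hδ := tendsto_mul_div_add_mul_sub_nhdsGE_zero hu₁i (hS_nonneg u₂ hu₂)
  filter_upwards [hu, hδ.eventually (hT v₁ hv₁ v₂ hv₂ hsupp₂), hcpos] with η hu hv hcη
  refine ⟨_, hu, _, hv, ?_⟩
  rw [hsplit]
  congr 1
  funext j
  simp only [Pi.add_apply, Pi.sub_apply, Pi.smul_apply, smul_eq_mul]
  field_simp
  ring

theorem dotProduct_eq_of_isMaxOn {n : ℕ} {S : Set (Fin n → ℝ)} (h : IsSuppExtendable S)
    {c z z' : Fin n → ℝ} (hz : z ∈ S) (hmax : IsMaxOn (c ⬝ᵥ ·) S z)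
    (hz' : z' ∈ suppSubset S z) : c ⬝ᵥ z' = c ⬝ᵥ z := by
  obtain ⟨η, hηS, hη⟩ := (((h z hz z' hz'.1 hz'.2).filter_mono
    (nhdsWithin_mono _ Set.Ioi_subset_Ici_self)).and self_mem_nhdsWithin).exists
  have hle : c ⬝ᵥ (z + η • (z - z')) ≤ c ⬝ᵥ z := hmax hηS
  rw [dotProduct_add, dotProduct_smul, dotProduct_sub, smul_eq_mul] at hle
  have hge : c ⬝ᵥ z ≤ c ⬝ᵥ z' := by nlinarith [show (0 : ℝ) < η from hη]
  exact le_antisymm (hmax hz'.1) hge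

end IsSuppExtendable

namespace IsTreeplex

variable {n : ℕ} {S : Set (Fin n → ℝ)}

theorem nonneg (h : IsTreeplex S) {z : Fin n → ℝ} (hz : z ∈ S) (i : Fin n) : 0 ≤ z i := by
  induction h with
  | simplex m => exact hz.1 i
  | prod _ _ ihS ihT =>
    obtain ⟨u, hu, v, hv, rfl⟩ := hz
    refine Fin.addCases (fun i => ?_) (fun i => ?_) i
    · simpa using ihS hu i
    · simpa using ihT hv i
  | branch i₀ _ _ ihS ihT =>
    obtain ⟨u, hu, v, hv, rfl⟩ := hz
    refine Fin.addCases (fun i => ?_) (fun i => ?_) i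
    · simpa using ihS hu i
    · simpa using mul_nonneg (ihS hu i₀) (ihT hv i)

theorem nonempty (h : IsTreeplex S) : S.Nonempty := by
  induction h with
  | simplex m =>
    refine ⟨Pi.single 0 1, fun i => ?_, by simp⟩
    by_cases hi : i = 0 <;> simp [hi]
  | prod _ _ ihS ihT =>
    obtain ⟨⟨u, hu⟩, ⟨v, hv⟩⟩ := And.intro ihS ihT
    exact ⟨_, u, hu, v, hv, rfl⟩
  | branch _ _ _ ihS ihT =>
    obtain ⟨⟨u, hu⟩, ⟨v, hv⟩⟩ := And.intro ihS ihT
    exact ⟨_, u, hu, v, hv, rfl⟩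

theorem convex (h : IsTreeplex S) : Convex ℝ S := by
  induction h with
  | simplex m => exact convex_stdSimplex ℝ _
  | prod _ _ ihS ihT =>
    rintro _ ⟨u₁, hu₁, v₁, hv₁, rfl⟩ _ ⟨u₂, hu₂, v₂, hv₂, rfl⟩ a b ha hb hab
    refine ⟨_, ihS hu₁ hu₂ ha hb hab, _, ihT hv₁ hv₂ ha hb hab, ?_⟩
    simp only [Fin.smul_append, Fin.append_add_append]
  | branch i₀ hS hT ihS ihT =>
    rintro _ ⟨u₁, hu₁, v₁, hv₁, rfl⟩ _ ⟨u₂, hu₂, v₂, hv₂, rfl⟩ a b ha hb hab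
    set w := a • u₁ + b • u₂
    have hp₁ : 0 ≤ a * u₁ i₀ := mul_nonneg ha (hS.nonneg hu₁ i₀)
    have hp₂ : 0 ≤ b * u₂ i₀ := mul_nonneg hb (hS.nonneg hu₂ i₀)
    have hw : w i₀ = a * u₁ i₀ + b * u₂ i₀ := rfl
    have hw_nonneg : 0 ≤ w i₀ := hw ▸ add_nonneg hp₁ hp₂
    simp only [Fin.smul_append, Fin.append_add_append]
    by_cases hw_zero : w i₀ = 0
    · obtain ⟨v, hv⟩ := hT.nonempty
      refine ⟨w, ihS hu₁ hu₂ ha hb hab, v, hv, congrArg _ (funext fun j => ?_)⟩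
      have h₁ : a * u₁ i₀ = 0 := by linarith
      have h₂ : b * u₂ i₀ = 0 := by linarith
      simp only [Pi.add_apply, Pi.smul_apply, smul_eq_mul, hw_zero, zero_mul]
      rw [← mul_assoc, ← mul_assoc, h₁, h₂]
      ring
    · refine ⟨w, ihS hu₁ hu₂ ha hb hab, (a * u₁ i₀ / w i₀) • v₁ + (b * u₂ i₀ / w i₀) • v₂,
        ihT hv₁ hv₂ (div_nonneg hp₁ hw_nonneg) (div_nonneg hp₂ hw_nonneg)
          (by field_simp; exact hw.symm), congrArg _ (funext fun j => ?_)⟩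
      simp only [Pi.add_apply, Pi.smul_apply, smul_eq_mul]
      field_simp

theorem isCompact (h : IsTreeplex S) : IsCompact S := by
  induction h with
  | simplex m => exact isCompact_stdSimplex ℝ _
  | @prod m k S T _ _ ihS ihT =>
    exact isCompact_setOf_exists_mem_eq ihS ihT (Fin.appendHomeomorph m k).continuous
  | @branch m k S T i₀ _ _ ihS ihT =>
    exact isCompact_setOf_exists_mem_eq ihS ihT
      ((Fin.appendHomeomorph m k).continuous.comp (by fun_prop :
        Continuous fun p : (Fin m → ℝ) × (Fin k → ℝ) => (p.1, p.1 i₀ • p.2)))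

theorem isSuppExtendable (h : IsTreeplex S) : IsSuppExtendable S := by
  induction h with
  | simplex m => exact IsSuppExtendable.stdSimplex (m + 1)
  | prod _ _ ihS ihT => exact ihS.prod ihT
  | branch i₀ hS _ ihS ihT =>
    exact IsSuppExtendable.branch i₀ (fun _ hu => hS.nonneg hu i₀) ihS ihT

end IsTreeplex

theorem isCompact_suppSubset {n : ℕ} {S : Set (Fin n → ℝ)} (hS : IsCompact S)
    (z : Fin n → ℝ) : IsCompact (suppSubset S z) := by
  have hsupp : suppSubset S z = S ∩ ⋂ i, {x | x i ≠ 0 → z i ≠ 0} := by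
    ext; simp [suppSubset]
  rw [hsupp]
  refine hS.inter_right (isClosed_iInter fun i => ?_)
  by_cases hi : z i = 0
  · simpa [hi] using isClosed_eq (continuous_apply i) continuous_const
  · simp [hi]


section Game

variable {M N : ℕ} {G : Matrix (Fin M) (Fin N) ℝ} {X : Set (Fin M → ℝ)} {Y : Set (Fin N → ℝ)}
  {xs : Fin M → ℝ} {ys : Fin N → ℝ}

theorem mem_Xstar_of_isSaddlePointOn (hYcp : IsCompact Y) {a : Fin M → ℝ} {b : Fin N → ℝ}
    (ha : a ∈ X) (hb : b ∈ Y) (h : IsSaddlePointOn X Y (fun x y => x ⬝ᵥ G *ᵥ y) a b) :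
    a ∈ Xstar G X Y := by
  refine ⟨ha, fun x hx => ?_⟩
  have hbdd : BddAbove ((fun y => dotp x (G *ᵥ y)) '' Y) :=
    (hYcp.image (by simp only [dotp_eq_dotProduct]; fun_prop)).bddAbove
  calc maxPayoff G Y a ≤ a ⬝ᵥ G *ᵥ b := csSup_le ⟨_, b, hb, rfl⟩ (by
        rintro _ ⟨y, hy, rfl⟩
        exact h a ha y hy)
    _ ≤ x ⬝ᵥ G *ᵥ b := h x hx b hb
    _ ≤ maxPayoff G Y x := le_csSup hbdd ⟨b, hb, rfl⟩

theorem mem_Ystar_of_isSaddlePointOn (hXcp : IsCompact X) {a : Fin M → ℝ} {b : Fin N → ℝ}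
    (ha : a ∈ X) (hb : b ∈ Y) (h : IsSaddlePointOn X Y (fun x y => x ⬝ᵥ G *ᵥ y) a b) :
    b ∈ Ystar G X Y := by
  refine ⟨hb, fun y hy => ?_⟩
  have hbdd : BddBelow ((fun x => dotp x (G *ᵥ y)) '' X) :=
    (hXcp.image (by simp only [dotp_eq_dotProduct]; fun_prop)).bddBelow
  calc minPayoff G X y ≤ a ⬝ᵥ G *ᵥ y := csInf_le hbdd ⟨a, ha, rfl⟩
    _ ≤ a ⬝ᵥ G *ᵥ b := h a ha y hy
    _ ≤ minPayoff G X b := le_csInf ⟨_, a, ha, rfl⟩ (by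
        rintro _ ⟨x, hx, rfl⟩
        exact h x hx b hb)

theorem isSaddlePointOn_of_unique_equilibrium (hXne : X.Nonempty) (hXcv : Convex ℝ X)
    (hXcp : IsCompact X) (hYne : Y.Nonempty) (hYcv : Convex ℝ Y) (hYcp : IsCompact Y)
    (hXs : Xstar G X Y = {xs}) (hYs : Ystar G X Y = {ys}) :
    xs ∈ X ∧ ys ∈ Y ∧ IsSaddlePointOn X Y (fun x y => x ⬝ᵥ G *ᵥ y) xs ys := by
  obtain ⟨a, ha, b, hb, hab⟩ :=
    (Matrix.toLinearMap₂' ℝ G).exists_isSaddlePointOn hXne hXcv hXcp hYne hYcv hYcp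
  simp only [Matrix.toLinearMap₂'_apply'] at hab
  have hxs : a = xs := by simpa [hXs] using mem_Xstar_of_isSaddlePointOn hYcp ha hb hab
  have hys : b = ys := by simpa [hYs] using mem_Ystar_of_isSaddlePointOn hXcp ha hb hab
  subst hxs hys
  exact ⟨ha, hb, hab⟩

theorem dotPt_Fop_sub (G : Matrix (Fin M) (Fin N) ℝ) (z z' : Pt M N) :
    dotPt (Fop G z) (z - z') = z.1 ⬝ᵥ G *ᵥ z'.2 - z'.1 ⬝ᵥ G *ᵥ z.2 := by
  simp only [dotPt, Fop, dotp_eq_dotProduct, Prod.fst_sub, Prod.snd_sub, dotProduct_sub,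
    neg_dotProduct, Matrix.mulVec_transpose, ← Matrix.dotProduct_mulVec]
  rw [dotProduct_comm _ z.1, dotProduct_comm _ z'.1]
  ring

theorem dotPt_Fop_sub_eq_of_isSaddlePointOn (hX : IsSuppExtendable X) (hY : IsSuppExtendable Y)
    (hxs : xs ∈ X) (hys : ys ∈ Y) (h : IsSaddlePointOn X Y (fun x y => x ⬝ᵥ G *ᵥ y) xs ys)
    (z : Pt M N) {x' : Fin M → ℝ} {y' : Fin N → ℝ} (hx' : x' ∈ suppSubset X xs)
    (hy' : y' ∈ suppSubset Y ys) :
    dotPt (Fop G z) (z - (x', y')) = (z.1 - xs) ⬝ᵥ G *ᵥ y' + x' ⬝ᵥ G *ᵥ (ys - z.2) := by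
  have hy'eq : (xs ᵥ* G) ⬝ᵥ y' = (xs ᵥ* G) ⬝ᵥ ys :=
    hY.dotProduct_eq_of_isMaxOn hys (isMaxOn_iff.2 fun y hy => by
      simpa only [Matrix.dotProduct_mulVec] using h xs hxs y hy) hy'
  have hx'eq : (-(G *ᵥ ys)) ⬝ᵥ x' = (-(G *ᵥ ys)) ⬝ᵥ xs :=
    hX.dotProduct_eq_of_isMaxOn hxs (isMaxOn_iff.2 fun x hx => by
      simpa only [neg_dotProduct, neg_le_neg_iff, dotProduct_comm (G *ᵥ ys)] using
        h x hx ys hys) hx'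
  rw [dotPt_Fop_sub, Matrix.mulVec_sub, dotProduct_sub, sub_dotProduct]
  simp only [neg_dotProduct, neg_inj, ← Matrix.dotProduct_mulVec, dotProduct_comm (G *ᵥ ys)]
    at hx'eq hy'eq
  linarith

theorem cx_mul_norm1_le (hYcp : IsCompact Y) (hys : ys ∈ suppSubset Y ys) {x : Fin M → ℝ}
    (hx : x ∈ X) :
    cx G X Y xs ys * norm1 (xs - x) ≤
      sSup ((fun y => dotp (x - xs) (G *ᵥ y)) '' suppSubset Y ys) := by
  have hle : ∀ x, dotp (x - xs) (G *ᵥ ys) ≤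
      sSup ((fun y => dotp (x - xs) (G *ᵥ y)) '' suppSubset Y ys) := fun x =>
    le_csSup ((isCompact_suppSubset hYcp ys).image
      (by simp only [dotp_eq_dotProduct]; fun_prop)).bddAbove ⟨ys, hys, rfl⟩
  rcases eq_or_ne x xs with rfl | hne
  · simpa [norm1, dotp] using hle x
  have hbdd : BddBelow ((fun x => cxVal G Y xs ys x) '' {x ∈ X | x ≠ xs}) := by
    refine ⟨-norm1 (G *ᵥ ys), ?_⟩
    rintro _ ⟨x', ⟨-, hx'⟩, rfl⟩
    dsimp only
    rw [cxVal, le_div_iff₀ (norm1_sub_pos hx')]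
    have habs : |dotp (x' - xs) (G *ᵥ ys)| ≤ norm1 (x' - xs) * norm1 (G *ᵥ ys) :=
      abs_dotProduct_le_norm1_mul_norm1 _ _
    linarith [hle x', neg_abs_le (dotp (x' - xs) (G *ᵥ ys))]
  have hpos := norm1_sub_pos hne
  calc cx G X Y xs ys * norm1 (xs - x) ≤ cxVal G Y xs ys x * norm1 (x - xs) := by
        rw [norm1_sub_comm]
        exact mul_le_mul_of_nonneg_right (csInf_le hbdd ⟨x, ⟨hx, hne⟩, rfl⟩) hpos.le
    _ = _ := div_mul_cancel₀ _ hpos.ne'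

theorem dotp_mulVec_sub_eq_neg_transpose (G : Matrix (Fin M) (Fin N) ℝ) (x : Fin M → ℝ)
    (y y' : Fin N → ℝ) : dotp x (G *ᵥ (y' - y)) = dotp (y - y') ((-Gᵀ) *ᵥ x) := by
  simp only [dotp_eq_dotProduct, Matrix.neg_mulVec, Matrix.mulVec_transpose, dotProduct_neg,
    Matrix.dotProduct_mulVec, ← neg_dotProduct, neg_sub, dotProduct_comm (x ᵥ* G)]

theorem cy_eq_cx_neg_transpose : cy G X Y xs ys = cx (-Gᵀ) Y X ys xs := by
  simp only [cy, cx, cyVal, cxVal, dotp_mulVec_sub_eq_neg_transpose G _ _ ys, norm1_sub_comm ys]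

theorem cy_mul_norm1_le (hXcp : IsCompact X) (hxs : xs ∈ suppSubset X xs) {y : Fin N → ℝ}
    (hy : y ∈ Y) :
    cy G X Y xs ys * norm1 (ys - y) ≤
      sSup ((fun x => dotp x (G *ᵥ (ys - y))) '' suppSubset X xs) := by
  simpa only [cy_eq_cx_neg_transpose, dotp_mulVec_sub_eq_neg_transpose G _ y ys]
    using cx_mul_norm1_le (G := -Gᵀ) hXcp hxs hy

end Game

theorem margin_inequality_general {M N : ℕ}
    (G : Matrix (Fin M) (Fin N) ℝ)
    (X : Set (Fin M → ℝ)) (Y : Set (Fin N → ℝ))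
    (hX : IsTreeplex X) (hY : IsTreeplex Y)
    (xs : Fin M → ℝ) (ys : Fin N → ℝ)
    (hXs : Xstar G X Y = {xs}) (hYs : Ystar G X Y = {ys}) :
    ∀ z ∈ X ×ˢ Y,
      min (cx G X Y xs ys) (cy G X Y xs ys) * norm1Pt ((xs, ys) - z) ≤
        sSup ((fun z' => dotPt (Fop G z) (z - z')) ''
          (suppSubset X xs ×ˢ suppSubset Y ys)) := by
  rintro z ⟨hx, hy⟩
  obtain ⟨hxs, hys, hsaddle⟩ := isSaddlePointOn_of_unique_equilibrium hX.nonempty hX.convex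
    hX.isCompact hY.nonempty hY.convex hY.isCompact hXs hYs
  have hxsV : xs ∈ suppSubset X xs := ⟨hxs, fun _ => id⟩
  have hysV : ys ∈ suppSubset Y ys := ⟨hys, fun _ => id⟩
  have hbdd : BddAbove ((fun z' => dotPt (Fop G z) (z - z')) ''
      (suppSubset X xs ×ˢ suppSubset Y ys)) :=
    (((isCompact_suppSubset hX.isCompact xs).prod (isCompact_suppSubset hY.isCompact ys)).image
      (by simp only [dotPt_Fop_sub]; fun_prop)).bddAbove
  calc min (cx G X Y xs ys) (cy G X Y xs ys) * norm1Pt ((xs, ys) - z)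
      ≤ cx G X Y xs ys * norm1 (xs - z.1) + cy G X Y xs ys * norm1 (ys - z.2) := by
        rw [show norm1Pt ((xs, ys) - z) = norm1 (xs - z.1) + norm1 (ys - z.2) from rfl, mul_add]
        gcongr
        exacts [norm1_nonneg _, min_le_left _ _, norm1_nonneg _, min_le_right _ _]
    _ ≤ sSup ((fun y => dotp (z.1 - xs) (G *ᵥ y)) '' suppSubset Y ys) +
          sSup ((fun x => dotp x (G *ᵥ (ys - z.2))) '' suppSubset X xs) :=
        add_le_add (cx_mul_norm1_le hY.isCompact hysV hx) (cy_mul_norm1_le hX.isCompact hxsV hy)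
    _ ≤ _ := by
        refine csSup_add_csSup_le ⟨_, ys, hysV, rfl⟩ ⟨_, xs, hxsV, rfl⟩ ?_
        rintro _ ⟨y', hy', rfl⟩ _ ⟨x', hx', rfl⟩
        refine le_csSup hbdd ⟨(x', y'), ⟨hx', hy'⟩, ?_⟩
        exact dotPt_Fop_sub_eq_of_isSaddlePointOn hX.isSuppExtendable hY.isSuppExtendable hxs hys
          hsaddle z hx' hy'

/-- Lemma 15': equilibrium margin inequality.  Under the
unique-Nash-equilibrium assumption, with `C = min{c_x, c_y}`, every `z ∈ Z = X × Y`
satisfies `max_{z' ∈ V*(Z)} F(z)ᵀ(z − z') ≥ C ‖z* − z‖₁`, where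
`V*(Z) = V*(X) × V*(Y)`. -/
theorem margin_inequality {M N : ℕ}
    (G : Matrix (Fin M) (Fin N) ℝ) (hG : ∀ i j, |G i j| ≤ 1)
    (X : Set (Fin M → ℝ)) (Y : Set (Fin N → ℝ))
    (hX : IsTreeplex X) (hY : IsTreeplex Y)
    (xs : Fin M → ℝ) (ys : Fin N → ℝ)
    (hXs : Xstar G X Y = {xs}) (hYs : Ystar G X Y = {ys}) :
    ∀ z ∈ X ×ˢ Y,
      min (cx G X Y xs ys) (cy G X Y xs ys) * norm1Pt ((xs, ys) - z) ≤
        sSup ((fun z' => dotPt (Fop G z) (z - z')) ''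
          (suppSubset X xs ×ˢ suppSubset Y ys)) :=
  margin_inequality_general G X Y hX hY xs ys hXs hYs
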